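/- For each neat equivalence class N of cyclic pairs in B ⊙ B, the k-linear map ψ_N: DA → A defined on the dual basis by ψ_N(γ*) = Σ_{(γ,δ) ∈ N} δ is a morphism of A–A-bimodules. -/

import Mathlib

/-!  Basic combinatorics of a quiver given by source/target maps `s t : A → V`.
A path of positive length is a list of arrows `[a₁, …, aₙ]` written in order of
traversal (so the written path `aₙ … a₁` of the paper corresponds to the list
`[a₁, …, aₙ]`).  -/

namespace Monomial

variable {V A : Type*}

/-- `l` is a path: consecutive arrows are composable. -/
def IsPath (s t : A → V) (l : List A) : Prop := l.Chain' fun a b => t a = s b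

/-- Source of a (nonempty) path. -/
def srcOf (s : A → V) (l : List A) : Option V := l.head?.map s

/-- Target of a (nonempty) path. -/
def tgtOf (t : A → V) (l : List A) : Option V := l.getLast?.map t

/-- `l` is a nontrivial cycle. -/
def IsCycleList (s t : A → V) (l : List A) : Prop :=
  l ≠ [] ∧ IsPath s t l ∧ tgtOf t l = srcOf s l

/-- `Z` is a minimal set of path relations of length at least two. -/
def MinimalRels (s t : A → V) (Z : Set (List A)) : Prop :=
  ∀ z ∈ Z, IsPath s t z ∧ 2 ≤ z.length ∧ ∀ w ∈ Z, w <:+: z → w = z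

/-- `l` belongs to `B`: it is a path containing no subpath from `Z`
(the basis of the monomial algebra, positive length part). -/
def InB (s t : A → V) (Z : Set (List A)) (l : List A) : Prop :=
  IsPath s t l ∧ ∀ z ∈ Z, ¬ z <:+: l

/-- `(a, β)` is a cyclic pair in `Q₁ ⊙ B` (if `β = []` it stands for the
trivial path at `s a = t a`). -/
def PairOK (s t : A → V) (Z : Set (List A)) (p : A × List A) : Prop :=
  InB s t Z p.2 ∧ IsCycleList s t (p.2 ++ [p.1])

/-- The set `W` of cycles containing precisely one subpath from `Z`,
located at their end (for a written cycle `γ = ξα`, the list is `α ++ ξ`). -/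
def InW (s t : A → V) (Z : Set (List A)) (l : List A) : Prop :=
  IsCycleList s t l ∧
    ∃ ξ ∈ Z, (∃ α, l = α ++ ξ) ∧ ∀ z ∈ Z, ∀ p q, l = p ++ z ++ q → z = ξ ∧ q = []

/-- Two cycles are in the same circuit iff they are related by rotation. -/
def RotEquiv (l₁ l₂ : List A) : Prop := ∃ n, l₁.rotate n = l₂

end Monomial

namespace Monomial

open Classical

variable {V A : Type*}

/-- The basis of the finite-dimensional monomial algebra `A = kQ/⟨Z⟩`:
a basis element is either a vertex (trivial path) or a nonzero path. -/
def PB (s t : A → V) (Z : Set (List A)) : Type _ :=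
  V ⊕ {l : List A // l ≠ [] ∧ InB s t Z l}

/-- Source vertex of a basis element. -/
def srcP (s t : A → V) (Z : Set (List A)) : PB s t Z → V
  | .inl u => u
  | .inr l => s (l.1.head l.2.1)

/-- Target vertex of a basis element. -/
def tgtP (s t : A → V) (Z : Set (List A)) : PB s t Z → V
  | .inl u => u
  | .inr l => t (l.1.getLast l.2.1)

/-- Underlying list of arrows of a basis element. -/
def toListP (s t : A → V) (Z : Set (List A)) : PB s t Z → List A
  | .inl _ => []
  | .inr l => l.1

/-- The product `p·q` of two basis elements of the monomial algebra (`q` is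
applied first); `none` means the product is zero in `A`. -/
noncomputable def comp (s t : A → V) (Z : Set (List A)) :
    PB s t Z → PB s t Z → Option (PB s t Z)
  | .inl u, .inl v => if u = v then some (.inl u) else none
  | .inl u, .inr l => if t (l.1.getLast l.2.1) = u then some (.inr l) else none
  | .inr l, .inl v => if s (l.1.head l.2.1) = v then some (.inr l) else none
  | .inr l, .inr m =>
      if h : InB s t Z (m.1 ++ l.1) then
        some (.inr ⟨m.1 ++ l.1, fun hc => m.2.1 (List.append_eq_nil_iff.mp hc).1, h⟩)
      else none

variable (s t : A → V) (Z : Set (List A)) (k : Type*) [Field k]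

/-- Both `A` and its dual bimodule `DA` are modelled on the space of
`k`-valued functions on the basis `PB s t Z` (for `DA`, the coordinates are
taken in the dual basis `B*`). -/
abbrev MSp := PB s t Z → k

/-- The basis element `γ` of `A`, and at the same time the dual basis element
`γ*` of `DA`. -/
noncomputable def db (γ : PB s t Z) : MSp s t Z k := fun x => if x = γ then 1 else 0

variable [Fintype (PB s t Z)]

/-- Generic linear map on `MSp` determined by a relation: `f ↦ (x ↦ Σ_{R x γ} f γ)`. -/
noncomputable def sumByRel (R : PB s t Z → PB s t Z → Prop) :
    MSp s t Z k →ₗ[k] MSp s t Z k where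
  toFun f x := ∑ γ, if R x γ then f γ else 0
  map_add' f g := by
    funext x
    simp only [Pi.add_apply]
    rw [← Finset.sum_add_distrib]
    exact Finset.sum_congr rfl fun γ _ => by split <;> simp
  map_smul' c f := by
    funext x
    simp only [Pi.smul_apply, smul_eq_mul, RingHom.id_apply]
    rw [Finset.mul_sum]
    exact Finset.sum_congr rfl fun γ _ => by split <;> simp

/-- The two-sided bimodule action `p·f·q` on `DA`: `(p·f·q)(x) = f(q·x·p)`. -/
noncomputable def actLR (p q : PB s t Z) : MSp s t Z k →ₗ[k] MSp s t Z k :=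
  sumByRel s t Z k fun x γ =>
    ((comp s t Z x p).bind fun y => comp s t Z q y) = some γ

/-- The left action `f ↦ p·f` on `DA`: `(p·f)(x) = f(x·p)`. -/
noncomputable def actLin (p : PB s t Z) : MSp s t Z k →ₗ[k] MSp s t Z k :=
  sumByRel s t Z k fun x γ => comp s t Z x p = some γ

/-- The right action `f ↦ f·p` on `DA`: `(f·p)(x) = f(p·x)`. -/
noncomputable def actRlin (p : PB s t Z) : MSp s t Z k →ₗ[k] MSp s t Z k :=
  sumByRel s t Z k fun x γ => comp s t Z p x = some γ

/-- Left multiplication `y ↦ p·y` on `A`. -/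
noncomputable def mulLin (p : PB s t Z) : MSp s t Z k →ₗ[k] MSp s t Z k :=
  sumByRel s t Z k fun r q => comp s t Z p q = some r

/-- Right multiplication `y ↦ y·p` on `A`. -/
noncomputable def mulRlin (p : PB s t Z) : MSp s t Z k →ₗ[k] MSp s t Z k :=
  sumByRel s t Z k fun r q => comp s t Z q p = some r

variable {s t Z}

/-- `(α, β)` is a cyclic pair: `t(β) = s(α)` and `t(α) = s(β)`. -/
def IsCyclicPairPB (α β : PB s t Z) : Prop :=
  tgtP s t Z β = srcP s t Z α ∧ tgtP s t Z α = srcP s t Z β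

/-- A cyclic pair `(α, β) ∈ B ⊙ B` is neat if any arrow extending `β` inside
`B` is the corresponding extremal arrow of `α`, and vice versa. -/
def IsNeatPB (α β : PB s t Z) : Prop :=
  (∀ a : A, t a = srcP s t Z β ∧ InB s t Z (a :: toListP s t Z β) →
    (toListP s t Z α).getLast? = some a) ∧
  (∀ a : A, s a = tgtP s t Z β ∧ InB s t Z (toListP s t Z β ++ [a]) →
    (toListP s t Z α).head? = some a) ∧
  (∀ b : A, t b = srcP s t Z α ∧ InB s t Z (b :: toListP s t Z α) →
    (toListP s t Z β).getLast? = some b) ∧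
  (∀ b : A, s b = tgtP s t Z α ∧ InB s t Z (toListP s t Z α ++ [b]) →
    (toListP s t Z β).head? = some b)

/-- The elementary relation on cyclic pairs in `B ⊙ B`:
`(aα, β) ∼ (α, βa)` and `(αb, β) ∼ (α, bβ)`. -/
def ElemRelPB (p q : PB s t Z × PB s t Z) : Prop :=
  IsCyclicPairPB p.1 p.2 ∧ IsCyclicPairPB q.1 q.2 ∧
    ((∃ a : A, toListP s t Z p.1 = toListP s t Z q.1 ++ [a] ∧
        toListP s t Z q.2 = a :: toListP s t Z p.2) ∨
     (∃ b : A, toListP s t Z p.1 = b :: toListP s t Z q.1 ∧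
        toListP s t Z q.2 = toListP s t Z p.2 ++ [b]))

/-- `N` is a neat equivalence class: an equivalence class of cyclic pairs under
the relation generated by the elementary relations, all of whose members are
neat cyclic pairs. -/
def NeatClass (N : Set (PB s t Z × PB s t Z)) : Prop :=
  ∃ p : PB s t Z × PB s t Z, IsCyclicPairPB p.1 p.2 ∧
    N = {q | Relation.EqvGen ElemRelPB p q} ∧
    ∀ q ∈ N, IsNeatPB q.1 q.2

variable (s t Z)

/-- `ψ_N(γ*) = Σ_{(γ,δ) ∈ N} δ`, the value of `ψ_N` on a dual basis vector. -/
noncomputable def psiTarget (N : Set (PB s t Z × PB s t Z)) (γ : PB s t Z) :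
    MSp s t Z k :=
  fun δ => if (γ, δ) ∈ N then 1 else 0

/-- The linear map `ψ_N : DA → A`. -/
noncomputable def psiLin (N : Set (PB s t Z × PB s t Z)) :
    MSp s t Z k →ₗ[k] MSp s t Z k :=
  sumByRel s t Z k fun δ γ => (γ, δ) ∈ N

/-- `φ : DA → A` is a morphism of `A–A`-bimodules. -/
def IsBimodMap (φ : MSp s t Z k →ₗ[k] MSp s t Z k) : Prop :=
  ∀ p : PB s t Z,
    φ ∘ₗ actLin s t Z k p = mulLin s t Z k p ∘ₗ φ ∧
    φ ∘ₗ actRlin s t Z k p = mulRlin s t Z k p ∘ₗ φ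

/-- The space `Hom_{A-A}(DA, A)` of bimodule morphisms. -/
noncomputable def BimodHoms :
    Submodule k (MSp s t Z k →ₗ[k] MSp s t Z k) where
  carrier := {φ | IsBimodMap s t Z k φ}
  zero_mem' := by
    intro p
    constructor <;> simp [LinearMap.zero_comp, LinearMap.comp_zero]
  add_mem' := by
    intro a b ha hb p
    exact ⟨by rw [LinearMap.add_comp, LinearMap.comp_add, (ha p).1, (hb p).1],
      by rw [LinearMap.add_comp, LinearMap.comp_add, (ha p).2, (hb p).2]⟩
  smul_mem' := by
    intro c x hx p
    exact ⟨by rw [LinearMap.smul_comp, LinearMap.comp_smul, (hx p).1],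
      by rw [LinearMap.smul_comp, LinearMap.comp_smul, (hx p).2]⟩

/-- The space `Alt(DA) = {φ ∈ Hom_{A-A}(DA, A) : φ + φ* = 0}`, where `φ*` is
the transpose of `φ` (in the bases `B*` and `B`): the condition `φ + φ* = 0`
reads `φ(γ*)_δ + φ(δ*)_γ = 0` for all `γ, δ ∈ B`. -/
noncomputable def AltHoms :
    Submodule k (MSp s t Z k →ₗ[k] MSp s t Z k) where
  carrier := {φ | IsBimodMap s t Z k φ ∧
    ∀ γ δ : PB s t Z, φ (db s t Z k γ) δ + φ (db s t Z k δ) γ = 0}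
  zero_mem' := by
    refine ⟨fun p => ?_, fun γ δ => by simp⟩
    constructor <;> simp [LinearMap.zero_comp, LinearMap.comp_zero]
  add_mem' := by
    intro a b ha hb
    refine ⟨fun p => ⟨?_, ?_⟩, fun γ δ => ?_⟩
    · rw [LinearMap.add_comp, LinearMap.comp_add, (ha.1 p).1, (hb.1 p).1]
    · rw [LinearMap.add_comp, LinearMap.comp_add, (ha.1 p).2, (hb.1 p).2]
    · have h1 := ha.2 γ δ
      have h2 := hb.2 γ δ
      simp only [LinearMap.add_apply, Pi.add_apply]
      linear_combination h1 + h2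
  smul_mem' := by
    intro c x hx
    refine ⟨fun p => ⟨?_, ?_⟩, fun γ δ => ?_⟩
    · rw [LinearMap.smul_comp, LinearMap.comp_smul, (hx.1 p).1]
    · rw [LinearMap.smul_comp, LinearMap.comp_smul, (hx.1 p).2]
    · have h := hx.2 γ δ
      simp only [LinearMap.smul_apply, Pi.smul_apply, smul_eq_mul]
      linear_combination c * h

end Monomial

/-!
On basis vectors, `ψ_N (p·f) = p·ψ_N f` says: for fixed `x` and `δ`, some `(γ, δ) ∈ N` has
`γp = x` exactly when some `(x, q) ∈ N` has `pq = δ`. For an arrow `p = b` this is the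
elementary move `(γb, q) ∼ (γ, bq)`, and neatness is what makes it available: `γb ∈ B` forces
`δ` to be of the form `bq`, and `bq ∈ B` forces `x` to be of the form `γb`. A longer path is a
product of arrows, and associativity chains the moves. Right multiplication is left
multiplication for the swapped class `{(δ, γ) | (γ, δ) ∈ N}`, which is again neat. Cancellation
in the monomial basis makes each such `γ` or `q` unique, so both sides of the bimodule equations
are the same sums of basis coefficients.
-/

namespace Monomial

variable {V A : Type*} {s t : A → V} {Z : Set (List A)}

@[simp] lemma toListP_inl (u : V) : toListP s t Z (.inl u) = [] := rfl

@[simp] lemma toListP_inr (l : {l : List A // l ≠ [] ∧ InB s t Z l}) :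
    toListP s t Z (.inr l) = l.1 := rfl

lemma inB_toListP_of_ne_nil {x : PB s t Z} (h : toListP s t Z x ≠ []) :
    InB s t Z (toListP s t Z x) := by
  cases x with
  | inl u => exact absurd rfl h
  | inr l => exact l.2.2

lemma tgtP_eq_srcP_of_toListP_eq_nil {x : PB s t Z} (h : toListP s t Z x = []) :
    tgtP s t Z x = srcP s t Z x := by
  cases x with
  | inl u => rfl
  | inr l => exact absurd h l.2.1

lemma srcP_eq_of_head?_eq {x : PB s t Z} {a : A} (h : (toListP s t Z x).head? = some a) :
    srcP s t Z x = s a := by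
  cases x with
  | inl u => simp at h
  | inr l => simp [srcP, List.head?_eq_some_head l.2.1] at h ⊢; rw [h]

lemma tgtP_eq_of_getLast?_eq {x : PB s t Z} {a : A}
    (h : (toListP s t Z x).getLast? = some a) : tgtP s t Z x = t a := by
  cases x with
  | inl u => simp at h
  | inr l => simp [tgtP, List.getLast?_eq_some_getLast l.2.1] at h ⊢; rw [h]

lemma PB.ext_srcP {x y : PB s t Z} (hl : toListP s t Z x = toListP s t Z y)
    (hs : srcP s t Z x = srcP s t Z y) : x = y := by
  rcases x with u | l <;> rcases y with v | m
  · exact congrArg Sum.inl hs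
  · exact absurd hl.symm m.2.1
  · exact absurd hl l.2.1
  · exact congrArg Sum.inr (Subtype.ext hl)

lemma PB.ext_tgtP {x y : PB s t Z} (hl : toListP s t Z x = toListP s t Z y)
    (ht : tgtP s t Z x = tgtP s t Z y) : x = y := by
  rcases x with u | l <;> rcases y with v | m
  · exact congrArg Sum.inl ht
  · exact absurd hl.symm m.2.1
  · exact absurd hl l.2.1
  · exact congrArg Sum.inr (Subtype.ext hl)

lemma IsPath.getLast_rel_head {l m : List A} (h : IsPath s t (l ++ m)) (hl : l ≠ [])
    (hm : m ≠ []) : t (l.getLast hl) = s (m.head hm) :=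
  (List.isChain_append.mp h).2.2 _ (List.getLast?_eq_some_getLast hl) _
    (List.head?_eq_some_head hm)

private lemma comp_eq_some_imp {x y r : PB s t Z} (h : comp s t Z x y = some r) :
    toListP s t Z r = toListP s t Z y ++ toListP s t Z x ∧ tgtP s t Z y = srcP s t Z x ∧
      srcP s t Z r = srcP s t Z y ∧ tgtP s t Z r = tgtP s t Z x := by
  rcases x with u | l <;> rcases y with v | m <;> rw [comp] at h <;> split_ifs at h with H <;>
    (injection h with h; subst h)
  · exact ⟨rfl, H.symm, H, rfl⟩
  · exact ⟨(List.append_nil _).symm, H, rfl, H⟩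
  · exact ⟨rfl, H.symm, H, rfl⟩
  · exact ⟨rfl, H.1.getLast_rel_head m.2.1 l.2.1, congrArg s (List.head_append_of_ne_nil m.2.1),
      congrArg t (List.getLast_append_of_ne_nil _ l.2.1)⟩

lemma comp_eq_some_iff {x y r : PB s t Z} :
    comp s t Z x y = some r ↔
      toListP s t Z r = toListP s t Z y ++ toListP s t Z x ∧ tgtP s t Z y = srcP s t Z x ∧
        srcP s t Z r = srcP s t Z y ∧ tgtP s t Z r = tgtP s t Z x := by
  refine ⟨comp_eq_some_imp, fun ⟨hl, hyx, hs, _⟩ => ?_⟩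
  obtain ⟨c, hc⟩ : ∃ c, comp s t Z x y = some c := by
    rcases x with u | l <;> rcases y with v | m
    · exact ⟨_, if_pos hyx.symm⟩
    · exact ⟨_, if_pos hyx⟩
    · exact ⟨_, if_pos hyx.symm⟩
    · have hr : toListP s t Z r ≠ [] := by simp [hl, m.2.1]
      exact ⟨_, dif_pos (hl ▸ inB_toListP_of_ne_nil hr)⟩
  obtain ⟨hcl, -, hcs, -⟩ := comp_eq_some_imp hc
  rw [hc, PB.ext_srcP (hcl.trans hl.symm) (hcs.trans hs.symm)]

lemma InB.infix {l l' : List A} (h : InB s t Z l) (hi : l' <:+: l) : InB s t Z l' :=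
  ⟨h.1.infix hi, fun z hz hzl => h.2 z hz (hzl.trans hi)⟩

lemma PB.ext_of_ne_nil {x y : PB s t Z} (hl : toListP s t Z x = toListP s t Z y)
    (hne : toListP s t Z x ≠ []) : x = y := by
  refine PB.ext_srcP hl ?_
  rw [srcP_eq_of_head?_eq (List.head?_eq_some_head hne),
    srcP_eq_of_head?_eq (a := (toListP s t Z x).head hne) (by rw [← hl, List.head?_eq_some_head])]

lemma exists_comp_eq_some_of_toListP_eq_append {x : PB s t Z} {l₁ l₂ : List A}
    (h : toListP s t Z x = l₁ ++ l₂) :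
    ∃ y z, toListP s t Z y = l₁ ∧ toListP s t Z z = l₂ ∧ comp s t Z z y = some x := by
  rcases eq_or_ne l₁ [] with rfl | h₁
  · exact ⟨.inl (srcP s t Z x), x, rfl, h, comp_eq_some_iff.mpr ⟨rfl, rfl, rfl, rfl⟩⟩
  rcases eq_or_ne l₂ [] with rfl | h₂
  · exact ⟨x, .inl (tgtP s t Z x), h.trans l₁.append_nil, rfl,
      comp_eq_some_iff.mpr ⟨(List.append_nil _).symm, rfl, rfl, rfl⟩⟩
  have hB : InB s t Z (l₁ ++ l₂) := h ▸ inB_toListP_of_ne_nil (by simp [h, h₁])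
  refine ⟨.inr ⟨l₁, h₁, hB.infix (List.prefix_append _ _).isInfix⟩,
    .inr ⟨l₂, h₂, hB.infix (List.suffix_append _ _).isInfix⟩, rfl, rfl, ?_⟩
  rw [comp, dif_pos hB]
  exact congrArg some (PB.ext_of_ne_nil h.symm (by simp [h₁]))

lemma comp_left_cancel {x x' p r : PB s t Z} (h : comp s t Z x p = some r)
    (h' : comp s t Z x' p = some r) : x = x' := by
  obtain ⟨hl, -, -, ht⟩ := comp_eq_some_iff.mp h
  obtain ⟨hl', -, -, ht'⟩ := comp_eq_some_iff.mp h'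
  exact PB.ext_tgtP (List.append_cancel_left (hl.symm.trans hl')) (ht.symm.trans ht')

lemma comp_right_cancel {p y y' r : PB s t Z} (h : comp s t Z p y = some r)
    (h' : comp s t Z p y' = some r) : y = y' := by
  obtain ⟨hl, -, hs, -⟩ := comp_eq_some_iff.mp h
  obtain ⟨hl', -, hs', -⟩ := comp_eq_some_iff.mp h'
  exact PB.ext_srcP (List.append_cancel_right (hl.symm.trans hl')) (hs.symm.trans hs')

lemma comp_assoc {x y z r : PB s t Z} :
    (∃ w, comp s t Z x y = some w ∧ comp s t Z w z = some r) ↔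
      ∃ v, comp s t Z y z = some v ∧ comp s t Z x v = some r := by
  constructor
  · rintro ⟨w, hxy, hwz⟩
    obtain ⟨lw, cw, sw, tw⟩ := comp_eq_some_iff.mp hxy
    obtain ⟨lr, cr, sr, tr⟩ := comp_eq_some_iff.mp hwz
    obtain ⟨v, x', lv, lx', hr⟩ := exists_comp_eq_some_of_toListP_eq_append
      (show toListP s t Z r = (toListP s t Z z ++ toListP s t Z y) ++ toListP s t Z x by
        rw [lr, lw, List.append_assoc])
    obtain ⟨-, cv, sv, tx'⟩ := comp_eq_some_iff.mp hr
    obtain rfl : x' = x := PB.ext_tgtP lx' (by rw [← tx', tr, tw])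
    exact ⟨v, comp_eq_some_iff.mpr ⟨lv, cr.trans sw, sv.symm.trans sr, cv.trans cw.symm⟩, hr⟩
  · rintro ⟨v, hyz, hxv⟩
    obtain ⟨lv, cv, sv, tv⟩ := comp_eq_some_iff.mp hyz
    obtain ⟨lr, cr, sr, tr⟩ := comp_eq_some_iff.mp hxv
    obtain ⟨z', w, lz', lw, hr⟩ := exists_comp_eq_some_of_toListP_eq_append
      (show toListP s t Z r = toListP s t Z z ++ (toListP s t Z y ++ toListP s t Z x) by
        rw [lr, lv, List.append_assoc])
    obtain ⟨-, cw, sz', tw⟩ := comp_eq_some_iff.mp hr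
    obtain rfl : z' = z := PB.ext_srcP lz' (by rw [← sz', sr, sv])
    exact ⟨w, comp_eq_some_iff.mpr ⟨lw, tv.symm.trans cr, cw.symm.trans cv, tw.symm.trans tr⟩, hr⟩

lemma IsCyclicPairPB.symm {α β : PB s t Z} (h : IsCyclicPairPB α β) : IsCyclicPairPB β α :=
  And.symm h

lemma IsNeatPB.symm {α β : PB s t Z} (h : IsNeatPB α β) : IsNeatPB β α :=
  ⟨h.2.2.1, h.2.2.2, h.1, h.2.1⟩

lemma ElemRelPB.swap {p q : PB s t Z × PB s t Z} (h : ElemRelPB p q) :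
    ElemRelPB q.swap p.swap := by
  obtain ⟨hp, hq, ⟨a, h₁, h₂⟩ | ⟨b, h₁, h₂⟩⟩ := h
  · exact ⟨hq.symm, hp.symm, Or.inr ⟨a, h₂, h₁⟩⟩
  · exact ⟨hq.symm, hp.symm, Or.inl ⟨b, h₂, h₁⟩⟩

lemma eqvGen_elemRelPB_swap {p q : PB s t Z × PB s t Z}
    (h : Relation.EqvGen ElemRelPB p q) : Relation.EqvGen ElemRelPB p.swap q.swap := by
  induction h with
  | rel _ _ h => exact .symm _ _ (.rel _ _ h.swap)
  | refl => exact .refl _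
  | symm _ _ _ ih => exact .symm _ _ ih
  | trans _ _ _ _ _ ih₁ ih₂ => exact .trans _ _ _ ih₁ ih₂

lemma isCyclicPairPB_iff_of_eqvGen {p q : PB s t Z × PB s t Z}
    (h : Relation.EqvGen ElemRelPB p q) :
    IsCyclicPairPB p.1 p.2 ↔ IsCyclicPairPB q.1 q.2 := by
  induction h with
  | rel _ _ h => exact iff_of_true h.1 h.2.1
  | refl => rfl
  | symm _ _ _ ih => exact ih.symm
  | trans _ _ _ _ _ ih₁ ih₂ => exact ih₁.trans ih₂

namespace NeatClass

variable {N : Set (PB s t Z × PB s t Z)}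

lemma isNeatPB (hN : NeatClass N) {q : PB s t Z × PB s t Z} (hq : q ∈ N) : IsNeatPB q.1 q.2 := by
  obtain ⟨p, -, -, h⟩ := hN
  exact h q hq

lemma isCyclicPairPB (hN : NeatClass N) {q : PB s t Z × PB s t Z} (hq : q ∈ N) :
    IsCyclicPairPB q.1 q.2 := by
  obtain ⟨p, hp, rfl, -⟩ := hN
  exact (isCyclicPairPB_iff_of_eqvGen hq).mp hp

lemma mem_iff_of_elemRelPB (hN : NeatClass N) {q q' : PB s t Z × PB s t Z} (h : ElemRelPB q q') :
    q ∈ N ↔ q' ∈ N := by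
  obtain ⟨p, -, rfl, -⟩ := hN
  exact ⟨fun hq => .trans _ _ _ hq (.rel _ _ h),
    fun hq' => .trans _ _ _ hq' (.symm _ _ (.rel _ _ h))⟩

lemma swap (hN : NeatClass N) : NeatClass (Prod.swap ⁻¹' N) := by
  obtain ⟨p, hp, rfl, hneat⟩ := hN
  refine ⟨p.swap, hp.symm, Set.ext fun q => ⟨fun hq => ?_, fun hq => ?_⟩,
    fun q hq => (hneat _ hq).symm⟩
  · simpa using eqvGen_elemRelPB_swap hq
  · simpa using eqvGen_elemRelPB_swap hq

end NeatClass

variable (N : Set (PB s t Z × PB s t Z)) in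
def LeftMulCompatible (p : PB s t Z) : Prop :=
  ∀ x δ, (∃ γ, (γ, δ) ∈ N ∧ comp s t Z γ p = some x) ↔ ∃ q, comp s t Z p q = some δ ∧ (x, q) ∈ N

variable {N : Set (PB s t Z × PB s t Z)}

lemma leftMulCompatible_of_toListP_eq_nil (hN : NeatClass N) {p : PB s t Z}
    (hp : toListP s t Z p = []) : LeftMulCompatible N p := by
  have hpv := tgtP_eq_srcP_of_toListP_eq_nil hp
  intro x δ
  constructor
  · rintro ⟨γ, hγδ, hγp⟩
    obtain ⟨lx, cp, sx, tx⟩ := comp_eq_some_iff.mp hγp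
    obtain rfl : x = γ := PB.ext_tgtP (by rw [lx, hp, List.nil_append]) tx
    refine ⟨δ, comp_eq_some_iff.mpr ⟨by rw [hp, List.append_nil], ?_, rfl, ?_⟩, hγδ⟩
    · rw [(hN.isCyclicPairPB hγδ).1, sx]
    · rw [(hN.isCyclicPairPB hγδ).1, ← cp]
  · rintro ⟨q, hpq, hxq⟩
    obtain ⟨lδ, cq, sδ, tδ⟩ := comp_eq_some_iff.mp hpq
    obtain rfl : δ = q := PB.ext_srcP (by rw [lδ, hp, List.append_nil]) sδ
    refine ⟨x, hxq, comp_eq_some_iff.mpr ⟨by rw [hp, List.nil_append], ?_, ?_, rfl⟩⟩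
    · rw [← (hN.isCyclicPairPB hxq).1, cq, hpv]
    · rw [← (hN.isCyclicPairPB hxq).1, cq]

lemma leftMulCompatible_of_toListP_eq_singleton (hN : NeatClass N) {p : PB s t Z} {b : A}
    (hp : toListP s t Z p = [b]) : LeftMulCompatible N p := by
  have sp : srcP s t Z p = s b := srcP_eq_of_head?_eq (by rw [hp]; rfl)
  have tp : tgtP s t Z p = t b := tgtP_eq_of_getLast?_eq (by rw [hp]; rfl)
  intro x δ
  constructor
  · rintro ⟨γ, hγδ, hγp⟩
    obtain ⟨lx, cp, sx, tx⟩ := comp_eq_some_iff.mp hγp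
    rw [hp] at lx
    have hcyc := hN.isCyclicPairPB hγδ
    have hBx : InB s t Z ([b] ++ toListP s t Z γ) := lx ▸ inB_toListP_of_ne_nil (by simp [lx])
    have hlast : (toListP s t Z δ).getLast? = some b :=
      (hN.isNeatPB hγδ).2.2.1 b ⟨tp ▸ cp, hBx⟩
    obtain ⟨m, hm⟩ := List.getLast?_eq_some_iff.mp hlast
    obtain ⟨q, p', lq, lp', hδ⟩ := exists_comp_eq_some_of_toListP_eq_append hm
    obtain rfl : p' = p := PB.ext_of_ne_nil (lp'.trans hp.symm) (by simp [lp'])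
    obtain ⟨-, cq, sδ, -⟩ := comp_eq_some_iff.mp hδ
    refine ⟨q, hδ, (hN.mem_iff_of_elemRelPB ⟨⟨cq.trans sx.symm, tx.trans (hcyc.2.trans sδ)⟩,
      hcyc, Or.inr ⟨b, lx, by rw [hm, lq]⟩⟩).mpr hγδ⟩
  · rintro ⟨q, hpq, hxq⟩
    obtain ⟨lδ, cq, sδ, tδ⟩ := comp_eq_some_iff.mp hpq
    rw [hp] at lδ
    have hcyc := hN.isCyclicPairPB hxq
    have hBδ : InB s t Z (toListP s t Z q ++ [b]) := lδ ▸ inB_toListP_of_ne_nil (by simp [lδ])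
    have hhead : (toListP s t Z x).head? = some b :=
      (hN.isNeatPB hxq).2.1 b ⟨sp ▸ cq.symm, hBδ⟩
    obtain ⟨l, hl⟩ := List.head?_eq_some_iff.mp hhead
    obtain ⟨p', γ, lp', lγ, hx⟩ := exists_comp_eq_some_of_toListP_eq_append (l₁ := [b]) hl
    obtain rfl : p' = p := PB.ext_of_ne_nil (lp'.trans hp.symm) (by simp [lp'])
    obtain ⟨-, cγ, -, tx⟩ := comp_eq_some_iff.mp hx
    refine ⟨γ, (hN.mem_iff_of_elemRelPB ⟨hcyc, ⟨tδ.trans cγ, tx.symm.trans (hcyc.2.trans sδ.symm)⟩,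
      Or.inr ⟨b, by rw [hl, lγ], lδ⟩⟩).mp hxq, hx⟩

lemma LeftMulCompatible.of_comp_eq_some {p₁ p₂ p : PB s t Z} (h₁ : LeftMulCompatible N p₁)
    (h₂ : LeftMulCompatible N p₂) (hp : comp s t Z p₁ p₂ = some p) : LeftMulCompatible N p := by
  have comp_p_right : ∀ γ x, comp s t Z γ p = some x ↔
      ∃ w, comp s t Z γ p₁ = some w ∧ comp s t Z w p₂ = some x := fun γ x => by
    rw [comp_assoc]
    exact ⟨fun h => ⟨p, hp, h⟩, fun ⟨v, hv, h⟩ => Option.some_inj.mp (hv.symm.trans hp) ▸ h⟩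
  have comp_p_left : ∀ q δ, comp s t Z p q = some δ ↔
      ∃ w, comp s t Z p₂ q = some w ∧ comp s t Z p₁ w = some δ := fun q δ => by
    rw [← comp_assoc]
    exact ⟨fun h => ⟨p, hp, h⟩, fun ⟨v, hv, h⟩ => Option.some_inj.mp (hv.symm.trans hp) ▸ h⟩
  intro x δ
  simp only [comp_p_right, comp_p_left]
  constructor
  · rintro ⟨γ, hγδ, w, hγw, hwx⟩
    obtain ⟨q₁, hq₁δ, hwq₁⟩ := (h₁ w δ).mp ⟨γ, hγδ, hγw⟩
    obtain ⟨q, hqq₁, hxq⟩ := (h₂ x q₁).mp ⟨w, hwq₁, hwx⟩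
    exact ⟨q, ⟨q₁, hqq₁, hq₁δ⟩, hxq⟩
  · rintro ⟨q, ⟨q₁, hqq₁, hq₁δ⟩, hxq⟩
    obtain ⟨w, hwq₁, hwx⟩ := (h₂ x q₁).mpr ⟨q, hqq₁, hxq⟩
    obtain ⟨γ, hγδ, hγw⟩ := (h₁ w δ).mpr ⟨q₁, hq₁δ, hwq₁⟩
    exact ⟨γ, hγδ, w, hγw, hwx⟩

lemma NeatClass.leftMulCompatible (hN : NeatClass N) (p : PB s t Z) : LeftMulCompatible N p := by
  induction hl : toListP s t Z p generalizing p with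
  | nil => exact leftMulCompatible_of_toListP_eq_nil hN hl
  | cons b l ih =>
    obtain ⟨pb, p₁, lpb, lp₁, hp⟩ := exists_comp_eq_some_of_toListP_eq_append (l₁ := [b]) hl
    exact (ih p₁ lp₁).of_comp_eq_some (leftMulCompatible_of_toListP_eq_singleton hN lpb) hp

lemma NeatClass.rightMulCompatible (hN : NeatClass N) (p x δ : PB s t Z) :
    (∃ γ, (γ, δ) ∈ N ∧ comp s t Z p γ = some x) ↔ ∃ q, comp s t Z q p = some δ ∧ (x, q) ∈ N := by
  have := hN.swap.leftMulCompatible p δ x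
  simp only [Set.mem_preimage, Prod.swap_prod_mk] at this
  exact ⟨fun ⟨γ, hγδ, hpγ⟩ => (this.mpr ⟨γ, hpγ, hγδ⟩).imp fun _ h => h.symm,
    fun ⟨q, hqp, hxq⟩ => (this.mp ⟨q, hxq, hqp⟩).imp fun _ h => h.symm⟩

section LinearMaps

open Classical

variable (k : Type*) [Field k] [Fintype (PB s t Z)]

lemma sumByRel_comp_sumByRel_apply (R S : PB s t Z → PB s t Z → Prop)
    (hu : ∀ x z y y', R x y → S y z → R x y' → S y' z → y = y') (f : MSp s t Z k)
    (x : PB s t Z) :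
    (sumByRel s t Z k R ∘ₗ sumByRel s t Z k S) f x =
      ∑ z, if ∃ y, R x y ∧ S y z then f z else 0 := by
  change (∑ y, if R x y then ∑ z, (if S y z then f z else 0) else 0) = _
  simp_rw [Finset.ite_sum_zero, ← ite_and]
  rw [Finset.sum_comm]
  exact Finset.sum_congr rfl fun z _ =>
    Fintype.sum_ite_eq_ite_exists _ (fun y y' h h' => hu x z y y' h.1 h.2 h'.1 h'.2) _

lemma sumByRel_comp_sumByRel_congr {R S R' S' : PB s t Z → PB s t Z → Prop}
    (hu : ∀ x z y y', R x y → S y z → R x y' → S y' z → y = y')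
    (hu' : ∀ x z y y', R' x y → S' y z → R' x y' → S' y' z → y = y')
    (hiff : ∀ x z, (∃ y, R x y ∧ S y z) ↔ ∃ y, R' x y ∧ S' y z) :
    sumByRel s t Z k R ∘ₗ sumByRel s t Z k S = sumByRel s t Z k R' ∘ₗ sumByRel s t Z k S' := by
  refine LinearMap.ext fun f => funext fun x => ?_
  rw [sumByRel_comp_sumByRel_apply k R S hu, sumByRel_comp_sumByRel_apply k R' S' hu']
  exact Finset.sum_congr rfl fun z _ => if_congr (hiff x z) rfl rfl

lemma psiLin_db (N : Set (PB s t Z × PB s t Z)) (γ : PB s t Z) :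
    psiLin s t Z k N (db s t Z k γ) = psiTarget s t Z k N γ := by
  ext δ
  change (∑ x, if (x, δ) ∈ N then db s t Z k γ x else 0) = _
  rw [Finset.sum_eq_single γ (fun x _ hx => by simp [db, hx]) (by simp)]
  simp [db, psiTarget]

end LinearMaps

end Monomial

open Monomial in
theorem psi_is_bimodule_map_general {V A k : Type*} [Field k] (s t : A → V)
    (Z : Set (List A)) [Fintype (PB s t Z)]
    (N : Set (PB s t Z × PB s t Z)) (hN : NeatClass N) :
    (∀ γ : PB s t Z, psiLin s t Z k N (db s t Z k γ) = psiTarget s t Z k N γ) ∧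
      IsBimodMap s t Z k (psiLin s t Z k N) := by
  refine ⟨psiLin_db k N, fun p => ⟨?_, ?_⟩⟩
  · exact sumByRel_comp_sumByRel_congr k (fun _ _ _ _ _ h _ h' => comp_left_cancel h h')
      (fun _ _ _ _ h _ h' _ => comp_right_cancel h h') (fun δ z => hN.leftMulCompatible p z δ)
  · exact sumByRel_comp_sumByRel_congr k (fun _ _ _ _ _ h _ h' => comp_right_cancel h h')
      (fun _ _ _ _ h _ h' _ => comp_left_cancel h h') (fun δ z => hN.rightMulCompatible p z δ)

open Monomial in
/-- for a neat equivalence class `N` of cyclic pairs, the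
`k`-linear map `ψ_N : DA → A` defined on the dual basis by
`ψ_N(γ*) = Σ_{(γ,δ) ∈ N} δ` is a morphism of `A–A`-bimodules. -/
theorem psi_is_bimodule_map {V A k : Type*} [Field k] (s t : A → V)
    (Z : Set (List A)) (hZ : MinimalRels s t Z) [Fintype (PB s t Z)]
    (N : Set (PB s t Z × PB s t Z)) (hN : NeatClass N) :
    (∀ γ : PB s t Z, psiLin s t Z k N (db s t Z k γ) = psiTarget s t Z k N γ) ∧
      IsBimodMap s t Z k (psiLin s t Z k N) :=
  psi_is_bimodule_map_general s t Z N hN
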